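/- Let J be a 2-torsion free and (n−1)-torsion free Jordan ring with nontrivial idempotent e satisfying conditions (i)–(iii), and D : J → J an n-multiplicative derivation with D(e) = 0. Then D is additive on J₁ and on J₀: D(a + b) = D(a) + D(b) for all a, b ∈ J_i, i ∈ {1, 0}. -/

import Mathlib

/-- Peirce 1-component relative to `e`: elements `x` with `e*x = x`. -/
def peirce1 {J : Type*} [Mul J] (e : J) : Set J := {x | e * x = x}

/-- Peirce 1/2-component relative to `e`: elements `x` with `e*x = (1/2)x`, i.e. `e*x + e*x = x`. -/
def peirceHalf {J : Type*} [Mul J] [Add J] (e : J) : Set J := {x | e * x + e * x = x}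

/-- Peirce 0-component relative to `e`: elements `x` with `e*x = 0`. -/
def peirce0 {J : Type*} [Mul J] [Zero J] (e : J) : Set J := {x | e * x = 0}

/-- The right-normed nonassociative monomial `x₁(x₂(⋯(x_{n-1}x_n)⋯))` on a list of arguments. -/
def rnm {J : Type*} [Mul J] [Zero J] : List J → J
  | [] => 0
  | [x] => x
  | x :: y :: l => x * rnm (y :: l)

/-- `d` is an `n`-multiplicative derivation (w.r.t. the right-normed monomial of degree `n`):
`d(m(x₁,…,xₙ)) = Σᵢ m(x₁,…,d(xᵢ),…,xₙ)`. -/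
def IsNDer {J : Type*} [NonUnitalNonAssocRing J] (n : ℕ) (d : J → J) : Prop :=
  ∀ l : List J, l.length = n →
    d (rnm l) = ∑ i ∈ Finset.range n, rnm (l.set i (d (l.getD i 0)))

/-!
Write `L` for left multiplication by `e`. Feeding the Leibniz rule of `D` monomials padded with
copies of `e`, on which `D` vanishes, shows that `D` commutes with `L`, satisfies
`D (x (e y)) = D x (e y) + x (e D y)` and `D (Lⁿ⁻² (a b)) = Lⁿ⁻² (D a b + a D b)`, and so preserves
the Peirce spaces. Products of `n - 1` elements of `J₀` annihilate `J₁`, hence cannot tell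
`D (x + u)` from `D x` when `u ∈ J₁`; conditions (ii) and (iii) then force `D (x + u) - D x ∈ J₁`,
while `D (x + v) - D x ∈ J₀` for `v ∈ J₀` because `D` commutes with `L`. This gives additivity on
`J₁ × J₀`. On `J₁ × J_{1/2}` and `J₀ × J_{1/2}`, condition (i) reduces additivity to the vanishing
of `Lⁿ⁻² (t δ)` for the defect `δ` and `t ∈ J_{1/2}`; by the Leibniz rule this is a defect of `D` at
an element of `J_{1/2}` and one of `J₁ + J₀`, which has no `J_{1/2}`-component. Additivity across
the three components follows, then additivity on `J_{1/2}` by comparing `J_{1/2}`-components in the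
Leibniz rule for `(e + t) (e (e + 2 t'))`, and finally additivity on `J₁` and `J₀` by (i) again.
-/

local notation "L" => AddMonoid.End.mulLeft

def ActsFaithfullyOn {J : Type*} [Mul J] [Zero J] (A P : Set J) : Prop :=
  ∀ x ∈ P, (∀ a ∈ A, a * x = 0) → x = 0

section MulLeft

variable {J : Type*} [NonUnitalNonAssocSemiring J] {e : J}

theorem prod_map_mulLeft_cons_apply (w : J) (l : List J) (x : J) :
    ((w :: l).map L).prod x = w * (l.map L).prod x :=
  rfl

theorem prod_map_mulLeft_append_apply (l l' : List J) (x : J) :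
    ((l ++ l').map L).prod x = (l.map L).prod ((l'.map L).prod x) := by
  rw [List.map_append, List.prod_append, AddMonoid.End.coe_mul, Function.comp_apply]

theorem prod_map_mulLeft_replicate (k : ℕ) (e : J) :
    ((List.replicate k e).map L).prod = L e ^ k := by
  rw [List.map_replicate, List.prod_replicate]

theorem mulLeft_pow_succ_apply (k : ℕ) (x : J) : (L e ^ (k + 1)) x = e * (L e ^ k) x := by
  rw [pow_succ']
  rfl

theorem mulLeft_pow_apply_mul (k : ℕ) (x : J) : (L e ^ k) (e * x) = e * (L e ^ k) x := by
  rw [← mulLeft_pow_succ_apply, pow_succ]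
  rfl

theorem mulLeft_pow_apply_self (he : IsIdempotentElem e) (k : ℕ) : (L e ^ k) e = e := by
  induction k with
  | zero => rfl
  | succ k ih => rw [mulLeft_pow_succ_apply, ih, he.eq]

theorem prod_map_mulLeft_apply_mem {A P : Set J} (hAP : ∀ a ∈ A, ∀ x ∈ P, a * x ∈ P) :
    ∀ {l : List J}, (∀ a ∈ l, a ∈ A) → ∀ {x : J}, x ∈ P → (l.map L).prod x ∈ P
  | [], _, _, hx => hx
  | a :: l, hl, _, hx =>
    hAP a (hl a (by simp)) _ (prod_map_mulLeft_apply_mem hAP (fun b hb => hl b (by simp [hb])) hx)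

theorem ActsFaithfullyOn.eq_zero_of_forall_prod_map_mulLeft_apply_eq_zero {A P : Set J}
    (hA : ActsFaithfullyOn A P) (hAP : ∀ a ∈ A, ∀ x ∈ P, a * x ∈ P) (k : ℕ) {x : J} (hx : x ∈ P)
    (h : ∀ l : List J, l.length = k → (∀ a ∈ l, a ∈ A) → (l.map L).prod x = 0) : x = 0 := by
  induction k generalizing x with
  | zero => simpa using h [] rfl (by simp)
  | succ k ih =>
    refine hA x hx fun a ha => ih (hAP a ha x hx) fun l hl hlA => ?_
    have h' := h (l ++ [a]) (by simp [hl]) (by simpa [or_imp, forall_and] using ⟨hlA, ha⟩)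
    rw [prod_map_mulLeft_append_apply] at h'
    exact h'

end MulLeft

section Peirce

variable {J : Type*} [NonUnitalNonAssocRing J] {e : J}

theorem add_mem_peirce1 {a b : J} (ha : a ∈ peirce1 e) (hb : b ∈ peirce1 e) :
    a + b ∈ peirce1 e := by
  simp_all [peirce1, mul_add]

theorem sub_mem_peirce1 {a b : J} (ha : a ∈ peirce1 e) (hb : b ∈ peirce1 e) :
    a - b ∈ peirce1 e := by
  simp_all [peirce1, mul_sub]

theorem add_mem_peirceHalf {a b : J} (ha : a ∈ peirceHalf e) (hb : b ∈ peirceHalf e) :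
    a + b ∈ peirceHalf e := by
  show e * (a + b) + e * (a + b) = a + b
  rw [mul_add]
  linear_combination (norm := module) ha.out + hb.out

theorem neg_mem_peirceHalf {a : J} (ha : a ∈ peirceHalf e) : -a ∈ peirceHalf e := by
  show e * -a + e * -a = -a
  rw [mul_neg, ← neg_add, ha.out]

theorem mulLeft_mem_peirceHalf {t : J} (ht : t ∈ peirceHalf e) : e * t ∈ peirceHalf e := by
  show e * (e * t) + e * (e * t) = e * t
  rw [← mul_add, ht.out]

theorem add_mem_peirce0 {a b : J} (ha : a ∈ peirce0 e) (hb : b ∈ peirce0 e) :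
    a + b ∈ peirce0 e := by
  simp_all [peirce0, mul_add]

theorem sub_mem_peirce0 {a b : J} (ha : a ∈ peirce0 e) (hb : b ∈ peirce0 e) :
    a - b ∈ peirce0 e := by
  simp_all [peirce0, mul_sub]

theorem eq_zero_of_mem_peirce1_of_mem_peirce0 {x : J} (h1 : x ∈ peirce1 e)
    (h0 : x ∈ peirce0 e) : x = 0 :=
  h1.symm.trans h0

theorem eq_zero_of_mem_peirce1_of_mem_peirceHalf {x : J} (h1 : x ∈ peirce1 e)
    (hh : x ∈ peirceHalf e) : x = 0 := by
  simp_all [peirceHalf, peirce1]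

theorem eq_zero_of_mem_peirceHalf_of_mem_peirce0 {x : J} (hh : x ∈ peirceHalf e)
    (h0 : x ∈ peirce0 e) : x = 0 := by
  simp_all [peirceHalf, peirce0]

theorem mulLeft_pow_apply_mem_peirceHalf {t : J} (ht : t ∈ peirceHalf e) (k : ℕ) :
    (L e ^ k) t ∈ peirceHalf e := by
  induction k with
  | zero => exact ht
  | succ k ih => rw [mulLeft_pow_succ_apply]; exact mulLeft_mem_peirceHalf ih

theorem eq_zero_of_mulLeft_pow_apply_eq_zero {t : J} (ht : t ∈ peirceHalf e) {k : ℕ}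
    (h : (L e ^ k) t = 0) : t = 0 := by
  induction k generalizing t with
  | zero => exact h
  | succ k ih =>
    rw [pow_succ, AddMonoid.End.coe_mul, Function.comp_apply] at h
    rw [← ht.out, ih (mulLeft_mem_peirceHalf ht) h, add_zero]

/- The Peirce projections: Lagrange interpolation of `1, 1/2, 0` at the roots of
`2X³ - 3X² + X`, which annihilates left multiplication by `e` (`mulLeft_cube`). -/

variable (e) in
def peirceProj1 : J →+ J :=
  AddMonoidHom.mk' (fun x => 2 • (e * (e * x)) - e * x) fun x y => by simp only [mul_add]; abel

variable (e) in
def peirceProjHalf : J →+ J :=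
  AddMonoidHom.mk' (fun x => 4 • (e * x - e * (e * x))) fun x y => by simp only [mul_add]; abel

variable (e) in
def peirceProj0 : J →+ J :=
  AddMonoidHom.mk' (fun x => x - 3 • (e * x) + 2 • (e * (e * x))) fun x y => by
    simp only [mul_add]; abel

theorem peirceProj1_add_peirceProjHalf_add_peirceProj0 (x : J) :
    peirceProj1 e x + peirceProjHalf e x + peirceProj0 e x = x := by
  simp only [peirceProj1, peirceProjHalf, peirceProj0, AddMonoidHom.mk'_apply]
  abel

theorem peirceProjHalf_eq_self {x : J} (hx : x ∈ peirceHalf e) : peirceProjHalf e x = x := by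
  have hx' : e * (e * x) + e * (e * x) = e * x := (mulLeft_mem_peirceHalf hx).out
  simp only [peirceProjHalf, AddMonoidHom.mk'_apply]
  linear_combination (norm := module) hx.out - (2 : ℤ) • hx'

theorem peirceProjHalf_eq_zero_of_mem_peirce1 {x : J} (hx : x ∈ peirce1 e) :
    peirceProjHalf e x = 0 := by
  simp_all [peirceProjHalf, peirce1]

theorem peirceProjHalf_eq_zero_of_mem_peirce0 {x : J} (hx : x ∈ peirce0 e) :
    peirceProjHalf e x = 0 := by
  simp_all [peirceProjHalf, peirce0]

theorem peirceProjHalf_mulLeft_pow_apply (k : ℕ) (x : J) :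
    peirceProjHalf e ((L e ^ k) x) = (L e ^ k) (peirceProjHalf e x) := by
  simp only [peirceProjHalf, AddMonoidHom.mk'_apply, map_nsmul, map_sub, mulLeft_pow_apply_mul]

end Peirce

attribute [local instance 100] LieRing.ofAssociativeRing

section Jordan

variable {J : Type*} [NonUnitalNonAssocCommRing J] [IsCommJordan J] {e : J}

theorem jordan_identity_linearized (h2 : ∀ x : J, x + x = 0 → x = 0) (a b c y : J) :
    a * ((b * c) * y) + b * ((c * a) * y) + c * ((a * b) * y) =
      (b * c) * (a * y) + (c * a) * (b * y) + (a * b) * (c * y) := by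
  have h : 2 • (a * ((b * c) * y) - (b * c) * (a * y) + (b * ((c * a) * y) - (c * a) * (b * y))
      + (c * ((a * b) * y) - (a * b) * (c * y))) = 0 :=
    DFunLike.congr_fun (two_nsmul_lie_lmul_lmul_add_add_eq_zero a b c) y
  rw [two_nsmul] at h
  rw [← sub_eq_zero, ← h2 _ h]
  abel

theorem mulLeft_cube (he : IsIdempotentElem e) (h2 : ∀ x : J, x + x = 0 → x = 0) (x : J) :
    2 • (e * (e * (e * x))) + e * x = 3 • (e * (e * x)) := by
  have h := jordan_identity_linearized h2 e e x e
  simp only [he.eq, mul_comm x e, mul_comm (e * x) e] at h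
  linear_combination (norm := module) h

theorem mulLeft_mul_of_mem_peirce1 (he : IsIdempotentElem e) (h2 : ∀ x : J, x + x = 0 → x = 0)
    {u : J} (hu : u ∈ peirce1 e) (y : J) : e * (u * y) = u * (e * y) := by
  have h := jordan_identity_linearized h2 e e u y
  rw [he.eq, mul_comm u e, hu.out] at h
  linear_combination (norm := module) h

theorem mulLeft_mul_of_mem_peirce0 (he : IsIdempotentElem e) (h2 : ∀ x : J, x + x = 0 → x = 0)
    {v : J} (hv : v ∈ peirce0 e) (y : J) : e * (v * y) = v * (e * y) := by
  have h := jordan_identity_linearized h2 e e v y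
  simp only [he.eq, mul_comm v e, hv.out, zero_mul, mul_zero, zero_add] at h
  exact h.symm

theorem mul_mem_peirceHalf_of_mem_peirce1 (he : IsIdempotentElem e)
    (h2 : ∀ x : J, x + x = 0 → x = 0) {u t : J} (hu : u ∈ peirce1 e) (ht : t ∈ peirceHalf e) :
    u * t ∈ peirceHalf e := by
  show e * (u * t) + e * (u * t) = u * t
  rw [mulLeft_mul_of_mem_peirce1 he h2 hu, ← mul_add, ht.out]

theorem mul_mem_peirceHalf_of_mem_peirce0 (he : IsIdempotentElem e)
    (h2 : ∀ x : J, x + x = 0 → x = 0) {v t : J} (hv : v ∈ peirce0 e) (ht : t ∈ peirceHalf e) :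
    v * t ∈ peirceHalf e := by
  show e * (v * t) + e * (v * t) = v * t
  rw [mulLeft_mul_of_mem_peirce0 he h2 hv, ← mul_add, ht.out]

theorem mul_mem_peirce0_of_mem_peirce0 (he : IsIdempotentElem e)
    (h2 : ∀ x : J, x + x = 0 → x = 0) {v v' : J} (hv : v ∈ peirce0 e) (hv' : v' ∈ peirce0 e) :
    v * v' ∈ peirce0 e := by
  show e * (v * v') = 0
  rw [mulLeft_mul_of_mem_peirce0 he h2 hv, hv'.out, mul_zero]

theorem mul_eq_zero_of_mem_peirce0_of_mem_peirce1 (he : IsIdempotentElem e)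
    (h2 : ∀ x : J, x + x = 0 → x = 0) {v u : J} (hv : v ∈ peirce0 e) (hu : u ∈ peirce1 e) :
    v * u = 0 := by
  have h1 : e * (v * u) = v * u := by rw [mulLeft_mul_of_mem_peirce0 he h2 hv, hu.out]
  have h0 : e * (u * v) = 0 := by rw [mulLeft_mul_of_mem_peirce1 he h2 hu, hv.out, mul_zero]
  rw [← h1, mul_comm v u, h0]

theorem commute_mulLeft_mul_of_mem_peirceHalf (h2 : ∀ x : J, x + x = 0 → x = 0) {t t' : J}
    (ht : t ∈ peirceHalf e) (ht' : t' ∈ peirceHalf e) : Commute (L e) (L (t * t')) := by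
  have h := two_nsmul_lie_lmul_lmul_add_add_eq_zero t t' e
  have hs : 2 • L (e * t) = L t := by rw [← map_nsmul, two_nsmul, ht.out]
  have hs' : 2 • L (t' * e) = L t' := by rw [mul_comm, ← map_nsmul, two_nsmul, ht'.out]
  rw [nsmul_add, nsmul_add, ← lie_nsmul, ← lie_nsmul, hs, hs', ← lie_skew (L t') (L t),
    add_neg_cancel, zero_add] at h
  refine commute_iff_lie_eq.2 (AddMonoidHom.ext fun y => h2 _ ?_)
  rw [← two_nsmul]
  exact DFunLike.congr_fun h y

theorem peirceProjHalf_mul_eq_zero (he : IsIdempotentElem e) (h2 : ∀ x : J, x + x = 0 → x = 0)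
    {t t' : J} (ht : t ∈ peirceHalf e) (ht' : t' ∈ peirceHalf e) :
    peirceProjHalf e (t * t') = 0 := by
  have h : e * (t * t' * e) = t * t' * (e * e) :=
    DFunLike.congr_fun (commute_mulLeft_mul_of_mem_peirceHalf h2 ht ht').eq e
  rw [he.eq, mul_comm _ e] at h
  simp only [peirceProjHalf, AddMonoidHom.mk'_apply, h, sub_self, smul_zero]

theorem peirceProj1_mem (he : IsIdempotentElem e) (h2 : ∀ x : J, x + x = 0 → x = 0) (x : J) :
    peirceProj1 e x ∈ peirce1 e := by
  show e * peirceProj1 e x = peirceProj1 e x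
  simp only [peirceProj1, AddMonoidHom.mk'_apply, mul_sub, mul_smul_comm]
  linear_combination (norm := module) mulLeft_cube he h2 x

theorem peirceProjHalf_mem (he : IsIdempotentElem e) (h2 : ∀ x : J, x + x = 0 → x = 0)
    (x : J) : peirceProjHalf e x ∈ peirceHalf e := by
  show e * peirceProjHalf e x + e * peirceProjHalf e x = peirceProjHalf e x
  simp only [peirceProjHalf, AddMonoidHom.mk'_apply, mul_sub, mul_smul_comm]
  linear_combination (norm := module) (-4 : ℤ) • mulLeft_cube he h2 x

theorem peirceProj0_mulLeft (he : IsIdempotentElem e) (h2 : ∀ x : J, x + x = 0 → x = 0)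
    (x : J) : peirceProj0 e (e * x) = 0 := by
  simp only [peirceProj0, AddMonoidHom.mk'_apply]
  linear_combination (norm := module) mulLeft_cube he h2 x

theorem peirceProj0_mem (he : IsIdempotentElem e) (h2 : ∀ x : J, x + x = 0 → x = 0) (x : J) :
    peirceProj0 e x ∈ peirce0 e := by
  show e * peirceProj0 e x = 0
  rw [← peirceProj0_mulLeft he h2 x]
  simp only [peirceProj0, AddMonoidHom.mk'_apply, mul_add, mul_sub, mul_smul_comm]

theorem prod_map_mulLeft_apply_mem_peirce1 (he : IsIdempotentElem e)
    (h2 : ∀ x : J, x + x = 0 → x = 0) {l : List J} (hl : ∀ a ∈ l, a ∈ peirce0 e) {u : J}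
    (hu : u ∈ peirce1 e) : (l.map L).prod u ∈ peirce1 e := by
  refine prod_map_mulLeft_apply_mem (fun a ha x hx => ?_) hl hu
  rw [mul_eq_zero_of_mem_peirce0_of_mem_peirce1 he h2 ha hx]
  exact mul_zero e

theorem prod_map_mulLeft_apply_eq_zero_of_mem_peirce1 (he : IsIdempotentElem e)
    (h2 : ∀ x : J, x + x = 0 → x = 0) {l : List J} (hl : l ≠ []) (hlA : ∀ a ∈ l, a ∈ peirce0 e)
    {u : J} (hu : u ∈ peirce1 e) : (l.map L).prod u = 0 := by
  obtain ⟨a, l, rfl⟩ := List.exists_cons_of_ne_nil hl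
  rw [prod_map_mulLeft_cons_apply]
  exact mul_eq_zero_of_mem_peirce0_of_mem_peirce1 he h2 (hlA a (by simp))
    (prod_map_mulLeft_apply_mem_peirce1 he h2 (fun b hb => hlA b (by simp [hb])) hu)

theorem mem_peirce1_of_forall_prod_map_mulLeft_apply_eq_zero (he : IsIdempotentElem e)
    (h2 : ∀ x : J, x + x = 0 → x = 0) (h₀₀ : ActsFaithfullyOn (peirce0 e) (peirce0 e))
    (h₀h : ActsFaithfullyOn (peirce0 e) (peirceHalf e)) {k : ℕ} (hk : k ≠ 0) {x : J}
    (hx : ∀ l : List J, l.length = k → (∀ a ∈ l, a ∈ peirce0 e) → (l.map L).prod x = 0) :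
    x ∈ peirce1 e := by
  have h0h : ∀ a ∈ peirce0 e, ∀ y ∈ peirceHalf e, a * y ∈ peirceHalf e :=
    fun a ha y hy => mul_mem_peirceHalf_of_mem_peirce0 he h2 ha hy
  have h00 : ∀ a ∈ peirce0 e, ∀ y ∈ peirce0 e, a * y ∈ peirce0 e :=
    fun a ha y hy => mul_mem_peirce0_of_mem_peirce0 he h2 ha hy
  have key : ∀ l : List J, l.length = k → (∀ a ∈ l, a ∈ peirce0 e) →
      (l.map L).prod (peirceProjHalf e x) = 0 ∧ (l.map L).prod (peirceProj0 e x) = 0 := by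
    intro l hl hlA
    have hsum := hx l hl hlA
    rw [← peirceProj1_add_peirceProjHalf_add_peirceProj0 (e := e) x, map_add, map_add,
      prod_map_mulLeft_apply_eq_zero_of_mem_peirce1 he h2 (by rintro rfl; exact hk hl.symm) hlA
        (peirceProj1_mem he h2 x), zero_add] at hsum
    have hh := prod_map_mulLeft_apply_mem h0h hlA (peirceProjHalf_mem he h2 x)
    have hz : (l.map L).prod (peirceProj0 e x) = 0 := by
      refine eq_zero_of_mem_peirceHalf_of_mem_peirce0 ?_
        (prod_map_mulLeft_apply_mem h00 hlA (peirceProj0_mem he h2 x))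
      rw [eq_neg_of_add_eq_zero_right hsum]
      exact neg_mem_peirceHalf hh
    rw [hz, add_zero] at hsum
    exact ⟨hsum, hz⟩
  have hh := h₀h.eq_zero_of_forall_prod_map_mulLeft_apply_eq_zero h0h k
    (peirceProjHalf_mem he h2 x) fun l hl hlA => (key l hl hlA).1
  have h0 := h₀₀.eq_zero_of_forall_prod_map_mulLeft_apply_eq_zero h00 k
    (peirceProj0_mem he h2 x) fun l hl hlA => (key l hl hlA).2
  rw [← peirceProj1_add_peirceProjHalf_add_peirceProj0 (e := e) x, hh, h0, add_zero, add_zero]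
  exact peirceProj1_mem he h2 x

end Jordan

section Leibniz

variable {J : Type*} [NonUnitalNonAssocRing J]

theorem rnm_cons {l : List J} (hl : l ≠ []) (a : J) : rnm (a :: l) = a * rnm l := by
  obtain ⟨b, l, rfl⟩ := List.exists_cons_of_ne_nil hl
  rfl

theorem rnm_append_singleton (l : List J) (x : J) : rnm (l ++ [x]) = (l.map L).prod x := by
  induction l with
  | nil => rfl
  | cons a l ih => rw [List.cons_append, rnm_cons (by simp), ih, prod_map_mulLeft_cons_apply]

variable (D : J → J)

/-- `leibnizSum D [w₁, …, wₖ] x = ∑ᵢ w₁ (⋯ (D wᵢ) (⋯ (wₖ x)))`. -/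
def leibnizSum : List J → AddMonoid.End J
  | [] => 0
  | w :: l => L (D w) * (l.map L).prod + L w * leibnizSum l

theorem leibnizSum_cons_apply (w : J) (l : List J) (x : J) :
    leibnizSum D (w :: l) x = D w * (l.map L).prod x + w * leibnizSum D l x :=
  rfl

theorem leibnizSum_singleton (a : J) : leibnizSum D [a] = L (D a) := by
  rw [leibnizSum, leibnizSum, List.map_nil, List.prod_nil, mul_one, mul_zero, add_zero]

theorem sum_rnm_set_append_singleton (l : List J) (x : J) :
    ∑ i ∈ Finset.range (l.length + 1), rnm ((l ++ [x]).set i (D ((l ++ [x]).getD i 0))) =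
      leibnizSum D l x + (l.map L).prod (D x) := by
  induction l with
  | nil => simp [leibnizSum, rnm]
  | cons w l ih =>
    have hset : ∀ i ∈ Finset.range (l.length + 1),
        rnm ((w :: l ++ [x]).set (i + 1) (D ((w :: l ++ [x]).getD (i + 1) 0))) =
          w * rnm ((l ++ [x]).set i (D ((l ++ [x]).getD i 0))) := fun i _ => by
      rw [List.cons_append, List.set_cons_succ, List.getD_cons_succ, rnm_cons (by simp)]
    rw [List.length_cons, Finset.sum_range_succ', Finset.sum_congr rfl hset, ← Finset.mul_sum, ih,
      List.cons_append, List.set_cons_zero, List.getD_cons_zero, rnm_cons (by simp),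
      rnm_append_singleton, leibnizSum_cons_apply, prod_map_mulLeft_cons_apply, mul_add]
    abel

variable {D} {n : ℕ} {e : J}

theorem IsNDer.map_prod_map_mulLeft_apply (hder : IsNDer n D) {l : List J}
    (hl : l.length + 1 = n) (x : J) :
    D ((l.map L).prod x) = leibnizSum D l x + (l.map L).prod (D x) := by
  have h := hder (l ++ [x]) (by simp [hl])
  rwa [rnm_append_singleton, ← hl, sum_rnm_set_append_singleton] at h

theorem leibnizSum_replicate (hDe : D e = 0) (k : ℕ) :
    leibnizSum D (List.replicate k e) = 0 := by
  induction k with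
  | zero => rfl
  | succ k ih => simp [List.replicate_succ, leibnizSum, ih, hDe]

theorem leibnizSum_append_replicate (hDe : D e = 0) (l : List J) (k : ℕ) :
    leibnizSum D (l ++ List.replicate k e) = leibnizSum D l * L e ^ k := by
  induction l with
  | nil => simp [leibnizSum_replicate hDe, leibnizSum]
  | cons w l ih => simp [leibnizSum, ih, List.prod_append, mul_assoc, add_mul]

theorem leibnizSum_replicate_append (hDe : D e = 0) (k : ℕ) (l : List J) :
    leibnizSum D (List.replicate k e ++ l) = L e ^ k * leibnizSum D l := by
  induction k with
  | zero => simp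
  | succ k ih => simp [List.replicate_succ, leibnizSum, ih, hDe, pow_succ', mul_assoc]

theorem IsNDer.map_mul_mulLeft_pow_apply (hder : IsNDer n D) (hDe : D e = 0) {k : ℕ}
    (hk : k + 2 = n) (a b : J) :
    D (a * (L e ^ k) b) = D a * (L e ^ k) b + a * (L e ^ k) (D b) := by
  have h := hder.map_prod_map_mulLeft_apply (l := a :: List.replicate k e) (by simpa using hk) b
  rwa [leibnizSum_cons_apply, prod_map_mulLeft_cons_apply, prod_map_mulLeft_cons_apply,
    leibnizSum_replicate hDe, prod_map_mulLeft_replicate, AddMonoid.End.zero_apply, mul_zero,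
    add_zero] at h

theorem IsNDer.map_mulLeft_pow_apply_mul (hder : IsNDer n D) (hDe : D e = 0) {k : ℕ}
    (hk : k + 2 = n) (a b : J) : D ((L e ^ k) (a * b)) = (L e ^ k) (D a * b + a * D b) := by
  have h := hder.map_prod_map_mulLeft_apply (l := List.replicate k e ++ [a]) (by simpa using hk) b
  rw [leibnizSum_replicate_append hDe, leibnizSum_singleton, prod_map_mulLeft_append_apply,
    prod_map_mulLeft_replicate, AddMonoid.End.coe_mul, Function.comp_apply,
    prod_map_mulLeft_append_apply, prod_map_mulLeft_replicate] at h
  rw [map_add]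
  exact h

theorem IsNDer.map_mul_mul_idempotent (hder : IsNDer n D) (hDe : D e = 0)
    (he : IsIdempotentElem e) {k : ℕ} (hk : k + 3 = n) (a b : J) :
    D (a * (b * e)) = D a * (b * e) + a * (D b * e) := by
  have h := hder.map_prod_map_mulLeft_apply (l := [a, b] ++ List.replicate k e)
    (by simpa using hk) e
  rw [leibnizSum_append_replicate hDe, prod_map_mulLeft_append_apply, prod_map_mulLeft_replicate,
    hDe, map_zero, add_zero, AddMonoid.End.coe_mul, Function.comp_apply,
    mulLeft_pow_apply_self he, leibnizSum_cons_apply, leibnizSum_singleton] at h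
  exact h

theorem IsNDer.mulLeft_pow_apply_mul_map_add_sub_sub (hder : IsNDer n D) (hDe : D e = 0)
    {k : ℕ} (hk : k + 2 = n) (t a b : J) :
    (L e ^ k) (t * (D (a + b) - D a - D b)) =
      D ((L e ^ k) (t * a) + (L e ^ k) (t * b)) - D ((L e ^ k) (t * a))
        - D ((L e ^ k) (t * b)) := by
  rw [← map_add, ← mul_add, hder.map_mulLeft_pow_apply_mul hDe hk,
    hder.map_mulLeft_pow_apply_mul hDe hk, hder.map_mulLeft_pow_apply_mul hDe hk]
  simp only [mul_add, mul_sub, map_add, map_sub]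
  abel

theorem IsNDer.map_add_of_actsFaithfullyOn (hder : IsNDer n D) (hn : 2 ≤ n) (hDe : D e = 0)
    {P : Set J} (hP : ∀ t ∈ peirceHalf e, ∀ x ∈ P, t * x ∈ peirceHalf e)
    (hfaith : ActsFaithfullyOn (peirceHalf e) P) {a b : J} (hab : D (a + b) - D a - D b ∈ P)
    (h : ∀ t ∈ peirceHalf e, peirceProjHalf e
      (D ((L e ^ (n - 2)) (t * a) + (L e ^ (n - 2)) (t * b)) - D ((L e ^ (n - 2)) (t * a))
        - D ((L e ^ (n - 2)) (t * b))) = 0) :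
    D (a + b) = D a + D b := by
  have hδ := hfaith _ hab fun t ht => by
    have htδ := hP t ht _ hab
    refine eq_zero_of_mulLeft_pow_apply_eq_zero htδ (k := n - 2) ?_
    rw [← peirceProjHalf_eq_self (mulLeft_pow_apply_mem_peirceHalf htδ _),
      hder.mulLeft_pow_apply_mul_map_add_sub_sub hDe (Nat.sub_add_cancel hn)]
    exact h t ht
  rwa [sub_sub, sub_eq_zero] at hδ

end Leibniz

section Derivation

variable {J : Type*} [NonUnitalNonAssocCommRing J] {e : J} {n : ℕ} {D : J → J}

theorem IsNDer.map_zero (hder : IsNDer n D) (hn : 2 ≤ n) (hDe : D e = 0) : D 0 = 0 := by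
  simpa using hder.map_mul_mulLeft_pow_apply hDe (Nat.sub_add_cancel hn) 0 0

theorem IsNDer.map_mulLeft (hder : IsNDer n D) (hn : 2 ≤ n) (hDe : D e = 0)
    (he : IsIdempotentElem e) (x : J) : D (e * x) = e * D x := by
  have h := hder.map_mul_mulLeft_pow_apply hDe (Nat.sub_add_cancel hn) x e
  rwa [mulLeft_pow_apply_self he, hDe, _root_.map_zero, mul_zero, add_zero, mul_comm x,
    mul_comm (D x)] at h

theorem IsNDer.map_mul_mulLeft (hder : IsNDer n D) (hn : 2 ≤ n) (hDe : D e = 0)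
    (he : IsIdempotentElem e) (x y : J) : D (x * (e * y)) = D x * (e * y) + x * (e * D y) := by
  obtain rfl | hn3 := hn.eq_or_lt
  · have h := hder.map_mulLeft_pow_apply_mul hDe (k := 0) rfl x (e * y)
    rwa [pow_zero, AddMonoid.End.one_apply, AddMonoid.End.one_apply,
      hder.map_mulLeft le_rfl hDe he] at h
  · have h := hder.map_mul_mul_idempotent hDe he (Nat.sub_add_cancel hn3) x y
    rwa [mul_comm y, mul_comm (D y)] at h

theorem IsNDer.map_mem_peirce1 (hder : IsNDer n D) (hn : 2 ≤ n) (hDe : D e = 0)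
    (he : IsIdempotentElem e) {u : J} (hu : u ∈ peirce1 e) : D u ∈ peirce1 e := by
  show e * D u = D u
  rw [← hder.map_mulLeft hn hDe he, hu.out]

theorem IsNDer.map_mem_peirce0 (hder : IsNDer n D) (hn : 2 ≤ n) (hDe : D e = 0)
    (he : IsIdempotentElem e) {v : J} (hv : v ∈ peirce0 e) : D v ∈ peirce0 e := by
  show e * D v = 0
  rw [← hder.map_mulLeft hn hDe he, hv.out, hder.map_zero hn hDe]

theorem IsNDer.map_add_sub_sub_mem_peirce0 (hder : IsNDer n D) (hn : 2 ≤ n) (hDe : D e = 0)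
    (he : IsIdempotentElem e) {v : J} (hv : v ∈ peirce0 e) (x : J) :
    D (x + v) - D x - D v ∈ peirce0 e := by
  show e * (D (x + v) - D x - D v) = 0
  rw [mul_sub, mul_sub, ← hder.map_mulLeft hn hDe he, ← hder.map_mulLeft hn hDe he, mul_add,
    hv.out, add_zero, sub_self, zero_sub, hder.map_mem_peirce0 hn hDe he hv, neg_zero]

end Derivation

section DerivationPeirce

variable {J : Type*} [NonUnitalNonAssocCommRing J] [IsCommJordan J] {e : J} {n : ℕ} {D : J → J}

theorem IsNDer.map_mem_peirceHalf (hder : IsNDer n D) (hn : 2 ≤ n) (hDe : D e = 0)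
    (he : IsIdempotentElem e) (h2 : ∀ x : J, x + x = 0 → x = 0) {t : J}
    (ht : t ∈ peirceHalf e) : D t ∈ peirceHalf e := by
  have h0 : peirceProj0 e (D t) = 0 := by
    rw [show D t = e * D (t + t) by rw [← hder.map_mulLeft hn hDe he, mul_add, ht.out]]
    exact peirceProj0_mulLeft he h2 _
  -- `(e + e) (e t) = e t`, so the Leibniz rule writes `peirceProj1 e (D t)` as an element of
  -- `J₁ J_{1/2} ⊆ J_{1/2}`.
  have hq : D (e + e) * (e * t) ∈ peirceHalf e :=
    mul_mem_peirceHalf_of_mem_peirce1 he h2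
      (hder.map_mem_peirce1 hn hDe he (add_mem_peirce1 he he)) (mulLeft_mem_peirceHalf ht)
  have hW := hder.map_mul_mulLeft hn hDe he (e + e) t
  rw [add_mul e e (e * t), ← mul_add, ht.out, hder.map_mulLeft hn hDe he, add_mul] at hW
  have h1 : peirceProj1 e (D t) = -(D (e + e) * (e * t)) := by
    simp only [peirceProj1, AddMonoidHom.mk'_apply]
    linear_combination (norm := module) -hW
  have hp1 : peirceProj1 e (D t) = 0 := eq_zero_of_mem_peirce1_of_mem_peirceHalf
    (peirceProj1_mem he h2 _) (h1 ▸ neg_mem_peirceHalf hq)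
  rw [← peirceProj1_add_peirceProjHalf_add_peirceProj0 (e := e) (D t), hp1, h0, zero_add,
    add_zero]
  exact peirceProjHalf_mem he h2 _

theorem IsNDer.map_add_self_of_mem_peirceHalf (hder : IsNDer n D) (hn : 2 ≤ n) (hDe : D e = 0)
    (he : IsIdempotentElem e) (h2 : ∀ x : J, x + x = 0 → x = 0) {t : J}
    (ht : t ∈ peirceHalf e) : D (t + t) = D t + D t := by
  have h : D t = e * D (t + t) := by rw [← hder.map_mulLeft hn hDe he, mul_add, ht.out]
  rw [h, (hder.map_mem_peirceHalf hn hDe he h2 (add_mem_peirceHalf ht ht)).out]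

theorem leibnizSum_apply_eq_zero_of_mem_peirce1 (he : IsIdempotentElem e)
    (h2 : ∀ x : J, x + x = 0 → x = 0) (hD : ∀ v ∈ peirce0 e, D v ∈ peirce0 e) :
    ∀ {l : List J}, (∀ a ∈ l, a ∈ peirce0 e) → ∀ {u : J}, u ∈ peirce1 e → leibnizSum D l u = 0
  | [], _, _, _ => rfl
  | w :: l, hl, u, hu => by
    have hl' : ∀ a ∈ l, a ∈ peirce0 e := fun a ha => hl a (by simp [ha])
    rw [leibnizSum_cons_apply, leibnizSum_apply_eq_zero_of_mem_peirce1 he h2 hD hl' hu, mul_zero,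
      add_zero]
    exact mul_eq_zero_of_mem_peirce0_of_mem_peirce1 he h2 (hD w (hl w (by simp)))
      (prod_map_mulLeft_apply_mem_peirce1 he h2 hl' hu)

theorem IsNDer.map_add_sub_mem_peirce1 (hder : IsNDer n D) (hn : 2 ≤ n) (hDe : D e = 0)
    (he : IsIdempotentElem e) (h2 : ∀ x : J, x + x = 0 → x = 0)
    (h₀₀ : ActsFaithfullyOn (peirce0 e) (peirce0 e))
    (h₀h : ActsFaithfullyOn (peirce0 e) (peirceHalf e)) {u : J} (hu : u ∈ peirce1 e) (x : J) :
    D (x + u) - D x ∈ peirce1 e := by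
  refine mem_peirce1_of_forall_prod_map_mulLeft_apply_eq_zero he h2 h₀₀ h₀h (k := n - 1)
    (by omega) fun l hl hlA => ?_
  have hl' : l.length + 1 = n := by omega
  have hlu : (l.map L).prod u = 0 :=
    prod_map_mulLeft_apply_eq_zero_of_mem_peirce1 he h2 (by rintro rfl; simp at hl; omega) hlA hu
  have hSu : leibnizSum D l u = 0 := leibnizSum_apply_eq_zero_of_mem_peirce1 he h2
    (fun v hv => hder.map_mem_peirce0 hn hDe he hv) hlA hu
  have h := hder.map_prod_map_mulLeft_apply hl' (x + u)
  rw [map_add (l.map L).prod, hlu, add_zero, map_add (leibnizSum D l), hSu, add_zero,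
    hder.map_prod_map_mulLeft_apply hl' x] at h
  rw [map_sub, sub_eq_zero]
  exact (add_left_cancel h).symm

theorem IsNDer.map_add_sub_sub_mem_peirce1 (hder : IsNDer n D) (hn : 2 ≤ n) (hDe : D e = 0)
    (he : IsIdempotentElem e) (h2 : ∀ x : J, x + x = 0 → x = 0)
    (h₀₀ : ActsFaithfullyOn (peirce0 e) (peirce0 e))
    (h₀h : ActsFaithfullyOn (peirce0 e) (peirceHalf e)) {u : J} (hu : u ∈ peirce1 e) (x : J) :
    D (x + u) - D x - D u ∈ peirce1 e :=
  sub_mem_peirce1 (hder.map_add_sub_mem_peirce1 hn hDe he h2 h₀₀ h₀h hu x)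
    (hder.map_mem_peirce1 hn hDe he hu)

theorem IsNDer.map_add_of_mem_peirce1_of_mem_peirce0 (hder : IsNDer n D) (hn : 2 ≤ n)
    (hDe : D e = 0) (he : IsIdempotentElem e) (h2 : ∀ x : J, x + x = 0 → x = 0)
    (h₀₀ : ActsFaithfullyOn (peirce0 e) (peirce0 e))
    (h₀h : ActsFaithfullyOn (peirce0 e) (peirceHalf e)) {u v : J} (hu : u ∈ peirce1 e)
    (hv : v ∈ peirce0 e) : D (u + v) = D u + D v := by
  have h1 := hder.map_add_sub_sub_mem_peirce1 hn hDe he h2 h₀₀ h₀h hu v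
  rw [add_comm v u, sub_right_comm] at h1
  have h := eq_zero_of_mem_peirce1_of_mem_peirce0 h1
    (hder.map_add_sub_sub_mem_peirce0 hn hDe he hv u)
  rwa [sub_sub, sub_eq_zero] at h

theorem IsNDer.peirceProjHalf_map_add_sub_sub (hder : IsNDer n D) (hn : 2 ≤ n) (hDe : D e = 0)
    (he : IsIdempotentElem e) (h2 : ∀ x : J, x + x = 0 → x = 0)
    (h₀₀ : ActsFaithfullyOn (peirce0 e) (peirce0 e))
    (h₀h : ActsFaithfullyOn (peirce0 e) (peirceHalf e)) {m : J} (hm : peirceProjHalf e m = 0)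
    (x : J) : peirceProjHalf e (D (x + m) - D x - D m) = 0 := by
  obtain ⟨m₁, hm₁, m₀, hm₀, rfl⟩ : ∃ m₁ ∈ peirce1 e, ∃ m₀ ∈ peirce0 e, m = m₁ + m₀ := by
    refine ⟨_, peirceProj1_mem he h2 m, _, peirceProj0_mem he h2 m, ?_⟩
    conv_lhs => rw [← peirceProj1_add_peirceProjHalf_add_peirceProj0 (e := e) m, hm, add_zero]
  have h : D (x + (m₁ + m₀)) - D x - D (m₁ + m₀) =
      (D (x + m₁) - D x - D m₁) + (D (x + m₁ + m₀) - D (x + m₁) - D m₀) := by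
    rw [hder.map_add_of_mem_peirce1_of_mem_peirce0 hn hDe he h2 h₀₀ h₀h hm₁ hm₀, add_assoc]
    abel
  rw [h, map_add, peirceProjHalf_eq_zero_of_mem_peirce1
      (hder.map_add_sub_sub_mem_peirce1 hn hDe he h2 h₀₀ h₀h hm₁ x),
    peirceProjHalf_eq_zero_of_mem_peirce0 (hder.map_add_sub_sub_mem_peirce0 hn hDe he hm₀ _),
    add_zero]

theorem IsNDer.map_add_of_mem_peirce1_of_mem_peirceHalf (hder : IsNDer n D) (hn : 2 ≤ n)
    (hDe : D e = 0) (he : IsIdempotentElem e) (h2 : ∀ x : J, x + x = 0 → x = 0)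
    (h₀₀ : ActsFaithfullyOn (peirce0 e) (peirce0 e))
    (h₀h : ActsFaithfullyOn (peirce0 e) (peirceHalf e))
    (hh₁ : ActsFaithfullyOn (peirceHalf e) (peirce1 e)) {u t : J} (hu : u ∈ peirce1 e)
    (ht : t ∈ peirceHalf e) : D (u + t) = D u + D t := by
  refine hder.map_add_of_actsFaithfullyOn hn hDe
    (fun t' ht' x hx => mul_comm x t' ▸ mul_mem_peirceHalf_of_mem_peirce1 he h2 hx ht') hh₁ ?_
    fun t' ht' => hder.peirceProjHalf_map_add_sub_sub hn hDe he h2 h₀₀ h₀h ?_ _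
  · have h := hder.map_add_sub_sub_mem_peirce1 hn hDe he h2 h₀₀ h₀h hu t
    rwa [add_comm t u, sub_right_comm] at h
  · rw [peirceProjHalf_mulLeft_pow_apply, peirceProjHalf_mul_eq_zero he h2 ht' ht,
      _root_.map_zero]

theorem IsNDer.map_add_of_mem_peirce0_of_mem_peirceHalf (hder : IsNDer n D) (hn : 2 ≤ n)
    (hDe : D e = 0) (he : IsIdempotentElem e) (h2 : ∀ x : J, x + x = 0 → x = 0)
    (h₀₀ : ActsFaithfullyOn (peirce0 e) (peirce0 e))
    (h₀h : ActsFaithfullyOn (peirce0 e) (peirceHalf e))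
    (hh₀ : ActsFaithfullyOn (peirceHalf e) (peirce0 e)) {v t : J} (hv : v ∈ peirce0 e)
    (ht : t ∈ peirceHalf e) : D (v + t) = D v + D t := by
  refine hder.map_add_of_actsFaithfullyOn hn hDe
    (fun t' ht' x hx => mul_comm x t' ▸ mul_mem_peirceHalf_of_mem_peirce0 he h2 hx ht') hh₀ ?_
    fun t' ht' => hder.peirceProjHalf_map_add_sub_sub hn hDe he h2 h₀₀ h₀h ?_ _
  · have h := hder.map_add_sub_sub_mem_peirce0 hn hDe he hv t
    rwa [add_comm t v, sub_right_comm] at h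
  · rw [peirceProjHalf_mulLeft_pow_apply, peirceProjHalf_mul_eq_zero he h2 ht' ht,
      _root_.map_zero]

theorem IsNDer.map_add_add_of_mem_peirce (hder : IsNDer n D) (hn : 2 ≤ n)
    (hDe : D e = 0) (he : IsIdempotentElem e) (h2 : ∀ x : J, x + x = 0 → x = 0)
    (h₀₀ : ActsFaithfullyOn (peirce0 e) (peirce0 e))
    (h₀h : ActsFaithfullyOn (peirce0 e) (peirceHalf e))
    (hh₁ : ActsFaithfullyOn (peirceHalf e) (peirce1 e))
    (hh₀ : ActsFaithfullyOn (peirceHalf e) (peirce0 e)) {a b c : J}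
    (ha : a ∈ peirce1 e) (hb : b ∈ peirceHalf e) (hc : c ∈ peirce0 e) :
    D (a + b + c) = D a + D b + D c := by
  have h1 : D (a + b + c) - D (a + b) - D c ∈ peirce1 e := by
    have h := sub_mem_peirce1 (hder.map_add_sub_mem_peirce1 hn hDe he h2 h₀₀ h₀h ha (b + c))
      (hder.map_add_sub_mem_peirce1 hn hDe he h2 h₀₀ h₀h ha b)
    convert h using 1
    rw [show b + c + a = a + b + c by abel, add_comm b a, add_comm b c,
      hder.map_add_of_mem_peirce0_of_mem_peirceHalf hn hDe he h2 h₀₀ h₀h hh₀ hc hb]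
    abel
  have h := eq_zero_of_mem_peirce1_of_mem_peirce0 h1
    (hder.map_add_sub_sub_mem_peirce0 hn hDe he hc _)
  rw [sub_sub, sub_eq_zero] at h
  rw [h, hder.map_add_of_mem_peirce1_of_mem_peirceHalf hn hDe he h2 h₀₀ h₀h hh₁ ha hb]

theorem IsNDer.map_add_mulLeft_of_mem_peirceHalf (hder : IsNDer n D) (hn : 2 ≤ n)
    (hDe : D e = 0) (he : IsIdempotentElem e) (h2 : ∀ x : J, x + x = 0 → x = 0)
    (h₀₀ : ActsFaithfullyOn (peirce0 e) (peirce0 e))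
    (h₀h : ActsFaithfullyOn (peirce0 e) (peirceHalf e))
    (hh₁ : ActsFaithfullyOn (peirceHalf e) (peirce1 e))
    (hh₀ : ActsFaithfullyOn (peirceHalf e) (peirce0 e)) {t t' : J}
    (ht : t ∈ peirceHalf e) (ht' : t' ∈ peirceHalf e) :
    D (e * t + e * t') = D (e * t) + D (e * t') := by
  have he₁ : e ∈ peirce1 e := he
  have hDt := hder.map_mem_peirceHalf hn hDe he h2 ht
  have hDt' := hder.map_mem_peirceHalf hn hDe he h2 ht'
  have hy : e * (e + (t' + t')) = e + t' := by rw [mul_add, mul_add, he.eq, ht'.out]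
  have hprod : (e + t) * (e + t') =
      (e + peirceProj1 e (t * t')) + (e * t + e * t') + peirceProj0 e (t * t') := by
    have h := peirceProj1_add_peirceProjHalf_add_peirceProj0 (e := e) (t * t')
    rw [peirceProjHalf_mul_eq_zero he h2 ht ht', add_zero] at h
    rw [add_mul, mul_add, mul_add, he.eq, mul_comm t e]
    linear_combination (norm := module) -h
  have ha := add_mem_peirce1 he₁ (peirceProj1_mem he h2 (t * t'))
  have hb := add_mem_peirceHalf (mulLeft_mem_peirceHalf ht) (mulLeft_mem_peirceHalf ht')
  have hc := peirceProj0_mem he h2 (t * t')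
  have hW := hder.map_mul_mulLeft hn hDe he (e + t) (e + (t' + t'))
  rw [hy, hprod, hder.map_add_add_of_mem_peirce hn hDe he h2 h₀₀ h₀h hh₁ hh₀ ha hb hc,
    hder.map_add_of_mem_peirce1_of_mem_peirceHalf hn hDe he h2 h₀₀ h₀h hh₁ he₁ ht,
    hder.map_add_of_mem_peirce1_of_mem_peirceHalf hn hDe he h2 h₀₀ h₀h hh₁ he₁
      (add_mem_peirceHalf ht' ht'),
    hder.map_add_self_of_mem_peirceHalf hn hDe he h2 ht', hDe, zero_add, zero_add, mul_add e,
    hDt'.out] at hW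
  -- On the left only `D (e t + e t')` lies in `J_{1/2}`; on the right, `D t t'` and `t D t'`
  -- lie in `J₁ + J₀`.
  have h := congrArg (peirceProjHalf e) hW
  rw [map_add, map_add, peirceProjHalf_eq_zero_of_mem_peirce1 (hder.map_mem_peirce1 hn hDe he ha),
    peirceProjHalf_eq_self (hder.map_mem_peirceHalf hn hDe he h2 hb),
    peirceProjHalf_eq_zero_of_mem_peirce0 (hder.map_mem_peirce0 hn hDe he hc), zero_add, add_zero,
    mul_add, add_mul, map_add, map_add, map_add, mul_comm (D t) e,
    peirceProjHalf_eq_self (mulLeft_mem_peirceHalf hDt),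
    peirceProjHalf_eq_self (mulLeft_mem_peirceHalf hDt'),
    peirceProjHalf_mul_eq_zero he h2 hDt ht', peirceProjHalf_mul_eq_zero he h2 ht hDt', add_zero,
    add_zero] at h
  rw [h, hder.map_mulLeft hn hDe he, hder.map_mulLeft hn hDe he]

theorem IsNDer.map_add_of_mem_peirceHalf (hder : IsNDer n D) (hn : 2 ≤ n)
    (hDe : D e = 0) (he : IsIdempotentElem e) (h2 : ∀ x : J, x + x = 0 → x = 0)
    (h₀₀ : ActsFaithfullyOn (peirce0 e) (peirce0 e))
    (h₀h : ActsFaithfullyOn (peirce0 e) (peirceHalf e))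
    (hh₁ : ActsFaithfullyOn (peirceHalf e) (peirce1 e))
    (hh₀ : ActsFaithfullyOn (peirceHalf e) (peirce0 e)) {s s' : J}
    (hs : s ∈ peirceHalf e) (hs' : s' ∈ peirceHalf e) : D (s + s') = D s + D s' := by
  have h := hder.map_add_mulLeft_of_mem_peirceHalf hn hDe he h2 h₀₀ h₀h hh₁ hh₀
    (add_mem_peirceHalf hs hs) (add_mem_peirceHalf hs' hs')
  rwa [mul_add e s, hs.out, mul_add e s', hs'.out] at h

theorem IsNDer.map_add_of_mem_peirce1 (hder : IsNDer n D) (hn : 2 ≤ n)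
    (hDe : D e = 0) (he : IsIdempotentElem e) (h2 : ∀ x : J, x + x = 0 → x = 0)
    (h₀₀ : ActsFaithfullyOn (peirce0 e) (peirce0 e))
    (h₀h : ActsFaithfullyOn (peirce0 e) (peirceHalf e))
    (hh₁ : ActsFaithfullyOn (peirceHalf e) (peirce1 e))
    (hh₀ : ActsFaithfullyOn (peirceHalf e) (peirce0 e)) {a b : J}
    (ha : a ∈ peirce1 e) (hb : b ∈ peirce1 e) : D (a + b) = D a + D b := by
  have hmul : ∀ t ∈ peirceHalf e, ∀ x ∈ peirce1 e, t * x ∈ peirceHalf e :=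
    fun t ht x hx => mul_comm x t ▸ mul_mem_peirceHalf_of_mem_peirce1 he h2 hx ht
  refine hder.map_add_of_actsFaithfullyOn hn hDe hmul hh₁
    (sub_mem_peirce1 (sub_mem_peirce1 (hder.map_mem_peirce1 hn hDe he (add_mem_peirce1 ha hb))
      (hder.map_mem_peirce1 hn hDe he ha)) (hder.map_mem_peirce1 hn hDe he hb)) fun t ht => ?_
  rw [hder.map_add_of_mem_peirceHalf hn hDe he h2 h₀₀ h₀h hh₁ hh₀
      (mulLeft_pow_apply_mem_peirceHalf (hmul t ht a ha) _)
      (mulLeft_pow_apply_mem_peirceHalf (hmul t ht b hb) _),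
    add_sub_cancel_left, sub_self, _root_.map_zero]

theorem IsNDer.map_add_of_mem_peirce0 (hder : IsNDer n D) (hn : 2 ≤ n)
    (hDe : D e = 0) (he : IsIdempotentElem e) (h2 : ∀ x : J, x + x = 0 → x = 0)
    (h₀₀ : ActsFaithfullyOn (peirce0 e) (peirce0 e))
    (h₀h : ActsFaithfullyOn (peirce0 e) (peirceHalf e))
    (hh₁ : ActsFaithfullyOn (peirceHalf e) (peirce1 e))
    (hh₀ : ActsFaithfullyOn (peirceHalf e) (peirce0 e)) {a b : J}
    (ha : a ∈ peirce0 e) (hb : b ∈ peirce0 e) : D (a + b) = D a + D b := by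
  have hmul : ∀ t ∈ peirceHalf e, ∀ x ∈ peirce0 e, t * x ∈ peirceHalf e :=
    fun t ht x hx => mul_comm x t ▸ mul_mem_peirceHalf_of_mem_peirce0 he h2 hx ht
  refine hder.map_add_of_actsFaithfullyOn hn hDe hmul hh₀
    (sub_mem_peirce0 (sub_mem_peirce0 (hder.map_mem_peirce0 hn hDe he (add_mem_peirce0 ha hb))
      (hder.map_mem_peirce0 hn hDe he ha)) (hder.map_mem_peirce0 hn hDe he hb)) fun t ht => ?_
  rw [hder.map_add_of_mem_peirceHalf hn hDe he h2 h₀₀ h₀h hh₁ hh₀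
      (mulLeft_pow_apply_mem_peirceHalf (hmul t ht a ha) _)
      (mulLeft_pow_apply_mem_peirceHalf (hmul t ht b hb) _),
    add_sub_cancel_left, sub_self, _root_.map_zero]

end DerivationPeirce

theorem nDer_additive_on_one_zero_general {n : ℕ} (hn : 2 ≤ n) {J : Type*} [NonUnitalNonAssocCommRing J]
    (hJordan : ∀ x y : J, ((x * x) * y) * x = (x * x) * (y * x))
    (h2 : ∀ x : J, x + x = 0 → x = 0)
    (e : J) (hid : e * e = e)
    (hcond1 : ∀ a ∈ peirce1 e, (∀ t ∈ peirceHalf e, t * a = 0) → a = 0)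
    (hcond1' : ∀ a ∈ peirce0 e, (∀ t ∈ peirceHalf e, t * a = 0) → a = 0)
    (hcond2 : ∀ a ∈ peirce0 e, (∀ t ∈ peirce0 e, t * a = 0) → a = 0)
    (hcond3 : ∀ a ∈ peirceHalf e, (∀ t ∈ peirce0 e, t * a = 0) → a = 0)
    (D : J → J) (hder : IsNDer n D) (hDe : D e = 0) :
    (∀ a ∈ peirce1 e, ∀ b ∈ peirce1 e, D (a + b) = D a + D b) ∧
    (∀ a ∈ peirce0 e, ∀ b ∈ peirce0 e, D (a + b) = D a + D b) := by
  have : IsCommJordan J := ⟨fun a b => by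
    rw [mul_comm (a * b), mul_comm a b, ← hJordan, mul_comm _ a, mul_comm (a * a) b]⟩
  exact ⟨fun a ha b hb =>
      hder.map_add_of_mem_peirce1 hn hDe hid h2 hcond2 hcond3 hcond1 hcond1' ha hb,
    fun a ha b hb =>
      hder.map_add_of_mem_peirce0 hn hDe hid h2 hcond2 hcond3 hcond1 hcond1' ha hb⟩

theorem nDer_additive_on_one_zero {n : ℕ} (hn : 2 ≤ n) {J : Type*} [NonUnitalNonAssocCommRing J]
    (hJordan : ∀ x y : J, ((x * x) * y) * x = (x * x) * (y * x))
    (h2 : ∀ x : J, x + x = 0 → x = 0)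
    (hn1 : ∀ x : J, (n - 1) • x = 0 → x = 0)
    (e : J) (hid : e * e = e) (hne : e ≠ 0) (hnu : ∃ x : J, e * x ≠ x)
    (hcond1 : ∀ a ∈ peirce1 e, (∀ t ∈ peirceHalf e, t * a = 0) → a = 0)
    (hcond1' : ∀ a ∈ peirce0 e, (∀ t ∈ peirceHalf e, t * a = 0) → a = 0)
    (hcond2 : ∀ a ∈ peirce0 e, (∀ t ∈ peirce0 e, t * a = 0) → a = 0)
    (hcond3 : ∀ a ∈ peirceHalf e, (∀ t ∈ peirce0 e, t * a = 0) → a = 0)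
    (D : J → J) (hder : IsNDer n D) (hDe : D e = 0) :
    (∀ a ∈ peirce1 e, ∀ b ∈ peirce1 e, D (a + b) = D a + D b) ∧
    (∀ a ∈ peirce0 e, ∀ b ∈ peirce0 e, D (a + b) = D a + D b) :=
  nDer_additive_on_one_zero_general hn hJordan h2 e hid hcond1 hcond1' hcond2 hcond3 D hder hDe
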